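/- Let t ≥ 2 be an integer and λ a partition of length at most nt. If t-core(λ) is orthogonal, then rk(t-core(λ)) = Σ_{r=1}^{⌊(t−1)/2⌋} |m_r(λ;nt) − n| = Σ_{r=⌊(t+2)/2⌋}^{t−1} |m_r(λ;nt) − n|. If t-core(λ) is symplectic, then rk(t-core(λ)) = Σ_{r=0}^{⌊(t−3)/2⌋} |m_r(λ;nt) − n| = Σ_{r=⌊t/2⌋}^{t−2} |m_r(λ;nt) − n|. If t-core(λ) is self-conjugate, then rk(t-core(λ)) = Σ_{r=0}^{⌊(t−2)/2⌋} |m_r(λ;nt) − n| = Σ_{r=⌊(t+1)/2⌋}^{t−1} |m_r(λ;nt) − n|. -/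

import Mathlib

open scoped BigOperators

noncomputable section

/-! ## The ring of symmetric functions and basic operators -/

/-- The ring of symmetric functions `Λ` (with coefficients in `ℚ`, so that the
half occurring in the definition of `sp_λ` is available), realised as the
polynomial ring in the algebraically independent complete homogeneous symmetric
functions `h₁, h₂, h₃, …`; the variable `n : ℕ` stands for `h_{n+1}`. -/
abbrev SymF : Type := MvPolynomial ℕ ℚ

/-- The complete homogeneous symmetric function `h_r ∈ Λ`, with `h_0 = 1` and
`h_r = 0` for `r < 0`. -/
def hh (r : ℤ) : SymF :=
  if r < 0 then 0 else if r = 0 then 1 else MvPolynomial.X (r.toNat - 1)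

/-- The algebra homomorphism `φ_t : Λ → Λ` determined by `φ_t h_r = h_{r/t}`
if `t ∣ r` and `φ_t h_r = 0` otherwise. -/
def phi (t : ℕ) : SymF →ₐ[ℚ] SymF :=
  MvPolynomial.aeval fun n =>
    if t ∣ (n + 1) then hh (((n + 1) / t : ℕ) : ℤ) else 0

/-- The elementary symmetric function `e_r`, via the Jacobi–Trudi determinant
`e_r = s_{(1^r)} = det_{1 ≤ i,j ≤ r}(h_{1 - i + j})`. -/
def ee (r : ℕ) : SymF :=
  Matrix.det (Matrix.of fun i j : Fin r => hh (1 + (j : ℤ) - (i : ℤ)))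

/-- The involution `ω : Λ → Λ`, determined by `ω h_r = e_r`. -/
def omegaSym : SymF →ₐ[ℚ] SymF :=
  MvPolynomial.aeval fun n => ee (n + 1)

/-- `(-1)^z` for an integer exponent `z`. -/
def msign (z : ℤ) : ℤ := if Even z then 1 else -1

/-! ## Partitions -/

/-- A partition, encoded as a weakly decreasing, eventually zero function
`ℕ → ℕ` (0-indexed: `f i` is the part `λ_{i+1}`). -/
def IsPartition (f : ℕ → ℕ) : Prop :=
  Antitone f ∧ ∃ N, ∀ i, N ≤ i → f i = 0

/-- The length `l(λ)` (number of nonzero parts). -/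
def plen (f : ℕ → ℕ) : ℕ := sInf {N | ∀ i, N ≤ i → f i = 0}

/-- Containment `μ ⊆ λ` of partitions. -/
def SubP (mu lam : ℕ → ℕ) : Prop := ∀ i, mu i ≤ lam i

/-- The conjugate partition `λ'`. -/
def conjP (f : ℕ → ℕ) : ℕ → ℕ := fun j => Set.ncard {i | j < f i}

/-- The Frobenius rank `rk(λ)` (side length of the Durfee square). -/
def rk (f : ℕ → ℕ) : ℕ := Set.ncard {i | i < f i}

/-- The size `|λ|` of a partition. -/
def psize (f : ℕ → ℕ) : ℕ := ∑ i ∈ Finset.range (plen f), f i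

/-- `λ` is `z`-asymmetric, i.e. `λ = (a | a + z)` in Frobenius notation, which
amounts to `λ'_i = λ_i + z` for all `1 ≤ i ≤ rk(λ)`.  `(-1)`-asymmetric
partitions are called orthogonal, `1`-asymmetric ones symplectic, and
`0`-asymmetric ones are exactly the self-conjugate ones. -/
def ZAsymmetric (z : ℤ) (f : ℕ → ℕ) : Prop :=
  ∀ i < rk f, (conjP f i : ℤ) = (f i : ℤ) + z

/-- The one-row partition `(c)`. -/
def rowP (c : ℕ) : ℕ → ℕ := fun i => if i = 0 then c else 0

/-- `λ` is a `t`-core: no box of the Young diagram has hook length `t`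
(the hook length of the box `(i,j)` is `λ_i + λ'_j - i - j + 1`, 1-indexed). -/
def IsTCore (t : ℕ) (f : ℕ → ℕ) : Prop :=
  ∀ i j, j < f i → f i + conjP f j ≠ i + j + 1 + t

/-! ## Schur functions and universal characters via Jacobi–Trudi determinants -/

/-- The Jacobi–Trudi determinant `det_{1 ≤ i,j ≤ n}(h_{λ_i - μ_j - i + j})`. -/
def sSkewN (lam mu : ℕ → ℕ) (n : ℕ) : SymF :=
  Matrix.det (Matrix.of fun i j : Fin n =>
    hh ((lam i : ℤ) - (mu j : ℤ) - (i : ℤ) + (j : ℤ)))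

open Classical in
/-- The skew Schur function `s_{λ/μ}`, defined by the Jacobi–Trudi formula
(and `0` if `μ ⊄ λ`). -/
def sSkew (lam mu : ℕ → ℕ) : SymF :=
  if SubP mu lam then sSkewN lam mu (plen lam) else 0

/-- The Schur function `s_λ`. -/
def sFun (lam : ℕ → ℕ) : SymF := sSkew lam fun _ => 0

/-- The universal orthogonal character
`o_λ = det_{1 ≤ i,j ≤ n}(h_{λ_i - i + j} - h_{λ_i - i - j})`. -/
def oU (lam : ℕ → ℕ) : SymF :=
  Matrix.det (Matrix.of fun i j : Fin (plen lam) =>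
    hh ((lam i : ℤ) - (i : ℤ) + (j : ℤ)) -
      hh ((lam i : ℤ) - (i : ℤ) - (j : ℤ) - 2))

/-- The universal symplectic character
`sp_λ = (1/2) · det_{1 ≤ i,j ≤ n}(h_{λ_i - i + j} + h_{λ_i - i - j + 2})`. -/
def spU (lam : ℕ → ℕ) : SymF :=
  (1 / 2 : ℚ) • Matrix.det (Matrix.of fun i j : Fin (plen lam) =>
    hh ((lam i : ℤ) - (i : ℤ) + (j : ℤ)) +
      hh ((lam i : ℤ) - (i : ℤ) - (j : ℤ)))

/-- The universal odd orthogonal character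
`so_λ = det_{1 ≤ i,j ≤ n}(h_{λ_i - i + j} + h_{λ_i - i - j + 1})`. -/
def soU (lam : ℕ → ℕ) : SymF :=
  Matrix.det (Matrix.of fun i j : Fin (plen lam) =>
    hh ((lam i : ℤ) - (i : ℤ) + (j : ℤ)) +
      hh ((lam i : ℤ) - (i : ℤ) - (j : ℤ) - 1))

/-- The variant `so⁻_λ = det_{1 ≤ i,j ≤ n}(h_{λ_i - i + j} - h_{λ_i - i - j + 1})`. -/
def soMinusU (lam : ℕ → ℕ) : SymF :=
  Matrix.det (Matrix.of fun i j : Fin (plen lam) =>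
    hh ((lam i : ℤ) - (i : ℤ) + (j : ℤ)) -
      hh ((lam i : ℤ) - (i : ℤ) - (j : ℤ) - 1))

/-- The rational universal character `rs_{λ,μ}` (one alphabet), via Koike's block
determinant, for weakly decreasing integer sequences `λ`, `μ` of lengths `n`, `m`. -/
def rsN (n m : ℕ) (lam mu : ℕ → ℤ) : SymF :=
  Matrix.det (Matrix.fromBlocks
    (Matrix.of fun i j : Fin n => hh (lam i - (i : ℤ) + (j : ℤ)))
    (Matrix.of fun (i : Fin n) (j : Fin m) => hh (lam i - (i : ℤ) - (j : ℤ) - 1))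
    (Matrix.of fun (i : Fin m) (j : Fin n) => hh (mu i - (i : ℤ) - (j : ℤ) - 1))
    (Matrix.of fun i j : Fin m => hh (mu i - (i : ℤ) + (j : ℤ))))

/-- `rs_{λ,μ}` for partitions `λ`, `μ`. -/
def rsP (lam mu : ℕ → ℕ) : SymF :=
  rsN (plen lam) (plen mu) (fun i => (lam i : ℤ)) fun i => (mu i : ℤ)

/-! ## Beta sets, cores, quotients and signs -/

/-- The beta set `β(λ; N) = {λ_i + N - i : 1 ≤ i ≤ N}`. -/
def betaSet (lam : ℕ → ℕ) (N : ℕ) : Finset ℕ :=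
  (Finset.range N).image fun i => lam i + (N - 1 - i)

/-- `m_r(λ; N)`: the number of elements of `β(λ; N)` congruent to `r` mod `t`. -/
def mr (t : ℕ) (lam : ℕ → ℕ) (N r : ℕ) : ℕ :=
  ((betaSet lam N).filter fun x => x % t = r).card

/-- The `r`-th component `λ^{(r)}` of the `t`-quotient of `λ` (computed, as per
the convention of the paper, from a beta set whose size is a multiple of `t`):
writing the elements of `β(λ; N)` in residue class `r` as `ξ_k t + r` with
`ξ_1 > ⋯ > ξ_m ≥ 0`, the `k`-th part is `ξ_k - m + k`. -/
def tQuot (t : ℕ) (lam : ℕ → ℕ) (r : ℕ) : ℕ → ℕ := fun k =>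
  let N := t * (plen lam + 1)
  let S := (betaSet lam N).filter fun x => x % t = r
  if k < S.card then (S.sort (· ≤ ·)).getD (S.card - 1 - k) 0 / t + (k + 1) - S.card
  else 0

/-- The `t`-core of `λ`: its `i`-th part is `ξ̃_i - N + i` where
`ξ̃_1 > ⋯ > ξ̃_N` are the integers `k t + r`, `0 ≤ k < m_r(λ; N)`, `0 ≤ r < t`. -/
def tCore (t : ℕ) (lam : ℕ → ℕ) : ℕ → ℕ := fun i =>
  let N := t * (plen lam + 1)
  let T := (Finset.range t).biUnion fun r =>
    (Finset.range (mr t lam N r)).image fun k => k * t + r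
  if i < N then (T.sort (· ≤ ·)).getD (N - 1 - i) 0 + (i + 1) - N else 0

/-- The sign of the permutation `w_t(λ; N)` sorting the beta set so that the
residues mod `t` increase and the entries within a residue class decrease,
computed as `(-1)` to the number of inversions: an inversion is a pair
`x > y` of elements of the beta set with `x mod t > y mod t`. -/
def sgnW (t : ℕ) (lam : ℕ → ℕ) (N : ℕ) : ℤ :=
  (-1) ^ ((betaSet lam N ×ˢ betaSet lam N).filter fun p : ℕ × ℕ =>
    p.2 < p.1 ∧ p.2 % t < p.1 % t).card

/-! ## Ribbons and tileability -/

/-- The cells of the skew shape `λ/μ` (0-indexed rows and columns). -/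
def SkewCells (lam mu : ℕ → ℕ) : Set (ℕ × ℕ) := {c | mu c.1 ≤ c.2 ∧ c.2 < lam c.1}

/-- Two cells are adjacent if they share an edge. -/
def CellAdj (c d : ℕ × ℕ) : Prop :=
  (c.1 = d.1 ∧ (c.2 + 1 = d.2 ∨ d.2 + 1 = c.2)) ∨
    (c.2 = d.2 ∧ (c.1 + 1 = d.1 ∨ d.1 + 1 = c.1))

/-- A set of cells is (edge-)connected. -/
def ConnectedCells (S : Set (ℕ × ℕ)) : Prop :=
  ∀ c ∈ S, ∀ d ∈ S, Relation.ReflTransGen (fun x y => x ∈ S ∧ y ∈ S ∧ CellAdj x y) c d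

/-- The set of cells contains a `2 × 2` square. -/
def Has2x2 (S : Set (ℕ × ℕ)) : Prop :=
  ∃ i j, (i, j) ∈ S ∧ (i + 1, j) ∈ S ∧ (i, j + 1) ∈ S ∧ (i + 1, j + 1) ∈ S

/-- The skew shape `λ/μ` is a `t`-ribbon: connected, `t` cells, no `2 × 2` square. -/
def IsRibbon (t : ℕ) (lam mu : ℕ → ℕ) : Prop :=
  SubP mu lam ∧ (SkewCells lam mu).ncard = t ∧
    ConnectedCells (SkewCells lam mu) ∧ ¬Has2x2 (SkewCells lam mu)

/-- The height of a ribbon `λ/μ`: one less than the number of rows it occupies. -/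
def ribbonHeight (lam mu : ℕ → ℕ) : ℕ :=
  (Prod.fst '' SkewCells lam mu).ncard - 1

/-- `ν` (as `ν 0, ν 1, …, ν k`) is a ribbon decomposition of the skew shape
`λ/μ` into `t`-ribbons: `ν 0 = μ`, `ν k = λ`, every `ν i` is a partition, and
each `ν (i+1) / ν i` is a `t`-ribbon. -/
def IsRibbonDecomp (t : ℕ) (mu lam : ℕ → ℕ) (k : ℕ) (ν : ℕ → ℕ → ℕ) : Prop :=
  ν 0 = mu ∧ ν k = lam ∧ (∀ i ≤ k, IsPartition (ν i)) ∧
    ∀ i < k, IsRibbon t (ν (i + 1)) (ν i)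

/-- The height of a ribbon decomposition: the sum of the heights of its ribbons.
The sign `sgn_t(λ/μ)` is `(-1)` to this quantity (for any decomposition). -/
def decompHeight (ν : ℕ → ℕ → ℕ) (k : ℕ) : ℕ :=
  ∑ i ∈ Finset.range k, ribbonHeight (ν (i + 1)) (ν i)

/-- The skew shape `λ/μ` is tileable by `t`-ribbons. -/
def Tileable (t : ℕ) (mu lam : ℕ → ℕ) : Prop :=
  ∃ k ν, IsRibbonDecomp t mu lam k ν

/-! ## The signs `ε` of Ayyer–Kumari -/

/-- The exponent `ε^o_{λ;nt}`. -/
def epsO (t : ℕ) (lam : ℕ → ℕ) (n : ℕ) : ℕ :=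
  (∑ r ∈ Finset.Icc ((t + 2) / 2) (t - 1), Nat.choose (mr t lam (n * t) r + 1) 2)
    + rk (tCore t lam)
    + if 2 ∣ t then Nat.choose (n + 1) 2 + n * rk (tCore t lam) else 0

/-- The exponent `ε^sp_{λ;nt}`. -/
def epsSp (t : ℕ) (lam : ℕ → ℕ) (n : ℕ) : ℕ :=
  (∑ r ∈ Finset.Icc (t / 2) (t - 2), Nat.choose (mr t lam (n * t) r + 1) 2)
    + if 2 ∣ t then Nat.choose (n + 1) 2 + n * rk (tCore t lam) else 0

/-- The exponent `ε^so_{λ;nt}`. -/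
def epsSo (t : ℕ) (lam : ℕ → ℕ) (n : ℕ) : ℕ :=
  (∑ r ∈ Finset.Icc ((t + 1) / 2) (t - 1), Nat.choose (mr t lam (n * t) r + 1) 2)
    + if 2 ∣ t then 0 else n * rk (tCore t lam)

/-! ## Evaluation at a finite complex alphabet -/

/-- The complete homogeneous polynomial `h_r(y₁,…,y_N)` evaluated at complex
numbers: the sum over all multisets of size `r` of the product of the values. -/
def hEval {N : ℕ} (y : Fin N → ℂ) (r : ℕ) : ℂ :=
  ∑ m ∈ (Finset.univ : Finset (Fin N)).sym r, (Multiset.map y (m : Multiset (Fin N))).prod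

/-- Evaluation of a universal symmetric function at the finite alphabet
`y₁, …, y_N` (substituting `h_r ↦ h_r(y)`). -/
def evalSym {N : ℕ} (y : Fin N → ℂ) : SymF →ₐ[ℚ] ℂ :=
  MvPolynomial.aeval fun n => hEval y (n + 1)

/-- The Schur polynomial `s_λ(y₁,…,y_N)` (equal to the ratio of alternants when
the `y_i` are distinct, and `0` when `l(λ) > N`). -/
def schurC {N : ℕ} (lam : ℕ → ℕ) (y : Fin N → ℂ) : ℂ := evalSym y (sFun lam)

/-- The algebra homomorphism `φ_t^q : Λ → Λ[q]` with
`φ_t^q h_{at+b} = q^b ∑_{k ≥ 0} q^{kt} h_{a-k}` for `a ≥ 0`, `0 ≤ b ≤ t-1`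
(the sum is finite since `h_{a-k} = 0` for `k > a`). -/
def phiQ (t : ℕ) : SymF →ₐ[ℚ] Polynomial SymF :=
  MvPolynomial.aeval fun m =>
    ∑ k ∈ Finset.range ((m + 1) / t + 1),
      Polynomial.C (hh ((((m + 1) / t - k : ℕ)) : ℤ)) *
        Polynomial.X ^ ((m + 1) % t + k * t)

/-!
On the `t`-abacus, `β(λ; N)` with `N = t (l(λ) + 1)` has `m_r = m_r(λ; N)` beads on runner
`r`, and the `t`-core `μ` is the partition whose beta set of size `N` has these beads pushed to
the top of every runner. Writing `L = l(λ) + 1`, runner `r` of `β(μ; N)` therefore carries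
`(m_r - L)⁺` beads at positions `≥ N` and `(L - m_r)⁺` gaps below `N`. The beads `≥ N` are the
numbers `N + a_i` and the gaps below `N` are the numbers `N - 1 - b_i`, where `μ = (a | b)`;
so `rk μ = ∑ᵣ (m_r - L)⁺`, and if `b = a + z` then `x ↦ 2N - 1 - z - x` carries the beads
`≥ N` onto the gaps `< N`, and runner `r` onto runner `c - r mod t`, where `c ≡ -1 - z`.
Thus `(m_r - L)⁺ = (L - m_{c - r})⁺`, and summing over one runner of each orbit of `r ↦ c - r`
gives `rk μ = ∑ |m_r - L|`. Finally `m_r - L = m_r(λ; nt) - n`, since enlarging a beta set by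
`t` adds one bead to every runner.
-/

open Finset

lemma IsLowerSet.mem_iff_lt_ncard {S : Set ℕ} (hS : IsLowerSet S) (hfin : S.Finite) {i : ℕ} :
    i ∈ S ↔ i < S.ncard := by
  obtain h | ⟨a, rfl⟩ := hS.eq_univ_or_Iio
  · exact absurd (h ▸ hfin) Set.infinite_univ
  · simp

namespace IsPartition

variable {f : ℕ → ℕ}

lemma eq_zero_of_plen_le (hf : IsPartition f) {i : ℕ} (hi : plen f ≤ i) : f i = 0 :=
  Nat.sInf_mem hf.2 i hi

lemma lt_plen_of_pos (hf : IsPartition f) {i : ℕ} (hi : 0 < f i) : i < plen f := by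
  by_contra h
  exact hi.ne' (hf.eq_zero_of_plen_le (not_lt.1 h))

lemma finite_setOf_lt (hf : IsPartition f) (j : ℕ) : {i | j < f i}.Finite :=
  (Set.finite_Iio (plen f)).subset fun _ hi => hf.lt_plen_of_pos (Nat.zero_lt_of_lt hi)

lemma lt_conjP_iff (hf : IsPartition f) {i j : ℕ} : i < conjP f j ↔ j < f i :=
  (IsLowerSet.mem_iff_lt_ncard (fun _ _ hba ha => lt_of_lt_of_le ha (hf.1 hba))
    (hf.finite_setOf_lt j)).symm

lemma conjP_antitone (hf : IsPartition f) : Antitone (conjP f) := fun _ _ hj =>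
  Set.ncard_le_ncard (fun _ hi => lt_of_le_of_lt hj hi) (hf.finite_setOf_lt _)

lemma conjP_le_plen (hf : IsPartition f) (j : ℕ) : conjP f j ≤ plen f := by
  by_contra h
  have := hf.lt_conjP_iff.1 (not_le.1 h)
  rw [hf.eq_zero_of_plen_le le_rfl] at this
  exact Nat.not_lt_zero _ this

lemma lt_rk_iff (hf : IsPartition f) {i : ℕ} : i < rk f ↔ i < f i :=
  (IsLowerSet.mem_iff_lt_ncard
    (fun _ _ hba ha => (lt_of_le_of_lt hba ha).trans_le (hf.1 hba))
    ((Set.finite_Iio (plen f)).subset fun _ hi =>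
      hf.lt_plen_of_pos (Nat.zero_lt_of_lt hi))).symm

end IsPartition

section BetaSet

variable {f : ℕ → ℕ} {t N r : ℕ}

lemma mem_betaSet {x : ℕ} : x ∈ betaSet f N ↔ ∃ i < N, f i + (N - 1 - i) = x := by
  simp [betaSet]

lemma card_betaSet (hf : Antitone f) (N : ℕ) : #(betaSet f N) = N := by
  rw [betaSet, card_image_of_injOn, card_range]
  refine StrictAntiOn.injOn fun i _ j hj hij => ?_
  have := hf hij.le
  simp only [coe_range, Set.mem_Iio] at hj
  omega

lemma sum_mr (hf : Antitone f) (ht : 0 < t) (N : ℕ) : ∑ r ∈ range t, mr t f N r = N :=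
  (card_eq_sum_card_fiberwise fun x _ => mem_range.2 (Nat.mod_lt x ht)).symm.trans
    (card_betaSet hf N)

lemma IsPartition.betaSet_add (hf : IsPartition f) (hN : plen f ≤ N) :
    betaSet f (N + t) = (betaSet f N).image (· + t) ∪ range t := by
  ext x
  simp only [mem_betaSet, mem_union, mem_image, mem_range]
  constructor
  · rintro ⟨i, hi, rfl⟩
    by_cases hiN : i < N
    · exact Or.inl ⟨_, ⟨i, hiN, rfl⟩, by omega⟩
    · have := hf.eq_zero_of_plen_le (i := i) (by omega)
      right; omega
  · rintro (⟨_, ⟨i, hi, rfl⟩, rfl⟩ | hx)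
    · exact ⟨i, by omega, by omega⟩
    · exact ⟨N + t - 1 - x, by omega, by rw [hf.eq_zero_of_plen_le (by omega)]; omega⟩

lemma IsPartition.mr_add (hf : IsPartition f) (hN : plen f ≤ N) (hr : r < t) :
    mr t f (N + t) r = mr t f N r + 1 := by
  have hdisj : Disjoint ((betaSet f N).image (· + t)) (range t) := by
    simp only [disjoint_left, mem_image, mem_range]
    rintro _ ⟨x, -, rfl⟩
    omega
  have hclass : (range t).filter (· % t = r) = {r} := by
    ext x
    simp only [mem_filter, mem_range, mem_singleton]
    constructor
    · rintro ⟨hx, rfl⟩; exact (Nat.mod_eq_of_lt hx).symm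
    · rintro rfl; exact ⟨hr, Nat.mod_eq_of_lt hr⟩
  rw [mr, hf.betaSet_add hN, filter_union, card_union_of_disjoint (disjoint_filter_filter hdisj),
    filter_image, card_image_of_injective _ (add_left_injective t), hclass, card_singleton]
  simp only [Nat.add_mod_right, mr]

lemma IsPartition.mr_add_mul (hf : IsPartition f) (hN : plen f ≤ N) (hr : r < t) (j : ℕ) :
    mr t f (N + j * t) r = mr t f N r + j := by
  induction j with
  | zero => simp
  | succ j ih => rw [add_one_mul, ← add_assoc, hf.mr_add (by omega) hr, ih, add_assoc]

lemma IsPartition.mr_mul_sub_eq (hf : IsPartition f) (hr : r < t) {a b : ℕ}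
    (ha : plen f ≤ a * t) (hb : plen f ≤ b * t) :
    (mr t f (a * t) r : ℤ) - a = mr t f (b * t) r - b := by
  rcases le_total a b with hab | hab
  · obtain ⟨d, rfl⟩ := Nat.exists_eq_add_of_le hab
    rw [add_mul, hf.mr_add_mul ha hr]; push_cast; ring
  · obtain ⟨d, rfl⟩ := Nat.exists_eq_add_of_le hab
    rw [add_mul, hf.mr_add_mul hb hr]; push_cast; ring

end BetaSet

section Frobenius

variable {f : ℕ → ℕ} {N : ℕ}

lemma IsPartition.filter_le_betaSet (hf : IsPartition f) (hN : plen f ≤ N) :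
    (betaSet f N).filter (N ≤ ·) = (range (rk f)).image fun i => f i + (N - 1 - i) := by
  ext x
  simp only [mem_filter, mem_betaSet, mem_image, mem_range, hf.lt_rk_iff]
  constructor
  · rintro ⟨⟨i, hi, rfl⟩, hle⟩
    exact ⟨i, by omega, rfl⟩
  · rintro ⟨i, hi, rfl⟩
    have := hf.lt_plen_of_pos (i := i) (by omega)
    exact ⟨⟨i, by omega, rfl⟩, by omega⟩

lemma IsPartition.rk_eq_card_filter_le_betaSet (hf : IsPartition f) (hN : plen f ≤ N) :
    rk f = #((betaSet f N).filter (N ≤ ·)) := by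
  rw [hf.filter_le_betaSet hN, card_image_of_injOn, card_range]
  refine StrictAntiOn.injOn fun i _ j hj hij => ?_
  simp only [coe_range, Set.mem_Iio, hf.lt_rk_iff] at hj
  have := hf.lt_plen_of_pos (i := j) (by omega)
  have := hf.1 hij.le
  omega

lemma card_range_sdiff_eq_card_filter_le {s : Finset ℕ} (hs : #s = N) :
    #(range N \ s) = #(s.filter (N ≤ ·)) := by
  rw [card_sdiff_comm (by rw [card_range, hs])]
  congr 1
  ext x
  simp

lemma IsPartition.range_sdiff_betaSet (hf : IsPartition f) (hN : plen f ≤ N) :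
    range N \ betaSet f N = (range (rk f)).image fun i => N + i - conjP f i := by
  symm
  refine eq_of_subset_of_card_le ?_ ?_
  · simp only [subset_iff, mem_image, mem_range, hf.lt_rk_iff, mem_sdiff, mem_betaSet]
    rintro _ ⟨i, hi, rfl⟩
    have hic : i < conjP f i := hf.lt_conjP_iff.2 hi
    have hcN := (hf.conjP_le_plen i).trans hN
    refine ⟨by omega, ?_⟩
    rintro ⟨k, hk, heq⟩
    have := hf.lt_conjP_iff (i := k) (j := i)
    by_cases hki : k < conjP f i <;> omega
  · rw [card_range_sdiff_eq_card_filter_le (card_betaSet hf.1 N),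
      ← hf.rk_eq_card_filter_le_betaSet hN, card_image_of_injOn, card_range]
    refine StrictMonoOn.injOn fun i _ j hj hij => ?_
    simp only [coe_range, Set.mem_Iio, hf.lt_rk_iff] at hj
    have := hf.conjP_antitone hij.le
    have := (hf.conjP_le_plen i).trans hN
    omega

variable {z : ℤ} {M : ℕ}

lemma ZAsymmetric.sub_betaSet_eq (hz : ZAsymmetric z f) (hf : IsPartition f)
    (hN : plen f ≤ N) (hM : (M : ℤ) = 2 * N - 1 - z) {i : ℕ} (hi : i < rk f) :
    f i + (N - 1 - i) ≤ M ∧ M - (f i + (N - 1 - i)) = N + i - conjP f i := by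
  have := hz i hi
  rw [hf.lt_rk_iff] at hi
  have := hf.lt_conjP_iff.2 hi
  have := (hf.conjP_le_plen i).trans hN
  have := hf.lt_plen_of_pos (i := i) (by omega)
  omega

lemma ZAsymmetric.le_of_mem_filter_le_betaSet (hz : ZAsymmetric z f) (hf : IsPartition f)
    (hN : plen f ≤ N) (hM : (M : ℤ) = 2 * N - 1 - z) :
    ∀ x ∈ (betaSet f N).filter (N ≤ ·), x ≤ M := by
  simp only [hf.filter_le_betaSet hN, mem_image, mem_range]
  rintro _ ⟨i, hi, rfl⟩
  exact (hz.sub_betaSet_eq hf hN hM hi).1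

lemma ZAsymmetric.image_sub_filter_le_betaSet (hz : ZAsymmetric z f) (hf : IsPartition f)
    (hN : plen f ≤ N) (hM : (M : ℤ) = 2 * N - 1 - z) :
    ((betaSet f N).filter (N ≤ ·)).image (M - ·) = range N \ betaSet f N := by
  rw [hf.filter_le_betaSet hN, hf.range_sdiff_betaSet hN, image_image]
  exact image_congr fun i hi => (hz.sub_betaSet_eq hf hN hM (mem_range.1 hi)).2

end Frobenius

lemma card_filter_mod_image_sub {A : Finset ℕ} {M t r r' : ℕ} (hA : ∀ x ∈ A, x ≤ M)
    (hr : r < t) (hr' : r' < t) (hrr' : r + r' ≡ M [MOD t]) :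
    #((A.image (M - ·)).filter (· % t = r')) = #(A.filter (· % t = r)) := by
  have mod_eq_iff : ∀ {a b : ℕ}, b < t → (a % t = b ↔ (t : ℤ) ∣ b - a) := fun hb => by
    rw [← Nat.modEq_iff_dvd, Nat.ModEq, Nat.mod_eq_of_lt hb]
  rw [Nat.modEq_iff_dvd] at hrr'
  rw [filter_image, card_image_of_injOn]
  · refine congrArg card (filter_congr fun x hx => ?_)
    rw [mod_eq_iff hr', mod_eq_iff hr, Nat.cast_sub (hA x hx),
      show (r' : ℤ) - (M - x) = -(M - (r + r' : ℕ)) - (r - x) by push_cast; ring]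
    exact dvd_sub_right (dvd_neg.2 hrr')
  · intro a ha b hb hab
    have := hA a (mem_filter.1 ha).1
    have := hA b (mem_filter.1 hb).1
    simp only at hab
    omega

def partitionOfBetaSet (T : Finset ℕ) (N : ℕ) : ℕ → ℕ := fun i =>
  if i < N then (T.sort (· ≤ ·)).getD (N - 1 - i) 0 + (i + 1) - N else 0

section OfBetaSet

variable {T : Finset ℕ} {N : ℕ}

lemma getD_sort_lt_getD_sort {j k : ℕ} (hjk : j < k) (hk : k < #T) :
    (T.sort (· ≤ ·)).getD j 0 < (T.sort (· ≤ ·)).getD k 0 := by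
  rw [List.getD_eq_getElem _ _ (by rw [length_sort]; omega),
    List.getD_eq_getElem _ _ (by rw [length_sort]; omega)]
  exact T.sortedLT_sort.getElem_lt_getElem_iff.2 hjk

lemma le_getD_sort {k : ℕ} (hk : k < #T) : k ≤ (T.sort (· ≤ ·)).getD k 0 := by
  induction k with
  | zero => exact Nat.zero_le _
  | succ k ih => exact (ih (by omega)).trans_lt (getD_sort_lt_getD_sort (lt_add_one k) hk)

lemma getD_sort_mem {k : ℕ} (hk : k < #T) : (T.sort (· ≤ ·)).getD k 0 ∈ T := by
  rw [List.getD_eq_getElem _ _ (by rw [length_sort]; omega), ← mem_sort (· ≤ ·)]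
  exact List.getElem_mem _

lemma partitionOfBetaSet_add (hT : #T = N) {i : ℕ} (hi : i < N) :
    partitionOfBetaSet T N i + (N - 1 - i) = (T.sort (· ≤ ·)).getD (N - 1 - i) 0 := by
  have := le_getD_sort (T := T) (k := N - 1 - i) (by omega)
  simp only [partitionOfBetaSet, if_pos hi]
  omega

lemma isPartition_partitionOfBetaSet (hT : #T = N) : IsPartition (partitionOfBetaSet T N) := by
  refine ⟨antitone_nat_of_succ_le fun i => ?_, N, fun i hi => if_neg (by omega)⟩
  by_cases hi : i + 1 < N
  · have := partitionOfBetaSet_add hT hi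
    have := partitionOfBetaSet_add hT (i := i) (by omega)
    have := getD_sort_lt_getD_sort (T := T) (j := N - 1 - (i + 1)) (k := N - 1 - i)
      (by omega) (by omega)
    omega
  · simp [partitionOfBetaSet, if_neg hi]

lemma plen_partitionOfBetaSet_le : plen (partitionOfBetaSet T N) ≤ N :=
  Nat.sInf_le fun _ hi => if_neg (by omega)

lemma betaSet_partitionOfBetaSet (hT : #T = N) : betaSet (partitionOfBetaSet T N) N = T := by
  refine eq_of_subset_of_card_le (fun x hx => ?_)
    (by rw [card_betaSet (isPartition_partitionOfBetaSet hT).1, hT])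
  obtain ⟨i, hi, rfl⟩ := mem_betaSet.1 hx
  rw [partitionOfBetaSet_add hT hi]
  exact getD_sort_mem (by omega)

end OfBetaSet

def packedBetaSet (t : ℕ) (m : ℕ → ℕ) : Finset ℕ :=
  (range t).biUnion fun r => (range (m r)).image fun k => k * t + r

section Packed

variable {t r : ℕ} {m : ℕ → ℕ}

lemma mul_add_lt_mul_iff {k L : ℕ} (hr : r < t) : k * t + r < L * t ↔ k < L := by
  constructor
  · intro h
    by_contra hk
    nlinarith [Nat.mul_le_mul_right t (not_lt.1 hk)]
  · intro h
    nlinarith [Nat.mul_le_mul_right t (Nat.succ_le_of_lt h)]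

lemma mul_add_injective (hr : r < t) : Function.Injective fun k => k * t + r :=
  fun _ _ h => Nat.eq_of_mul_eq_mul_right (Nat.zero_lt_of_lt hr) (Nat.add_right_cancel h)

lemma filter_mod_range_mul (hr : r < t) (L : ℕ) :
    (range (t * L)).filter (· % t = r) = (range L).image (· * t + r) := by
  rw [mul_comm t L]
  ext x
  simp only [mem_filter, mem_range, mem_image]
  constructor
  · rintro ⟨hx, rfl⟩
    have hdiv := Nat.div_add_mod' x t
    exact ⟨x / t, (mul_add_lt_mul_iff hr).1 (by omega), hdiv⟩
  · rintro ⟨k, hk, rfl⟩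
    exact ⟨(mul_add_lt_mul_iff hr).2 hk, Nat.mul_add_mod_of_lt hr⟩

lemma filter_mod_packedBetaSet (hr : r < t) :
    (packedBetaSet t m).filter (· % t = r) = (range (m r)).image (· * t + r) := by
  ext x
  simp only [packedBetaSet, mem_filter, mem_biUnion, mem_image, mem_range]
  constructor
  · rintro ⟨⟨r', hr', k, hk, rfl⟩, hmod⟩
    rw [Nat.mul_add_mod_of_lt hr'] at hmod
    exact ⟨k, hmod ▸ hk, by rw [hmod]⟩
  · rintro ⟨k, hk, rfl⟩
    exact ⟨⟨r, hr, k, hk, rfl⟩, Nat.mul_add_mod_of_lt hr⟩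

lemma card_packedBetaSet (ht : 0 < t) : #(packedBetaSet t m) = ∑ r ∈ range t, m r := by
  rw [card_eq_sum_card_fiberwise fun x _ => mem_range.2 (Nat.mod_lt x ht)]
  refine sum_congr rfl fun r hr => ?_
  rw [filter_mod_packedBetaSet (mem_range.1 hr),
    card_image_of_injective _ (mul_add_injective (mem_range.1 hr)), card_range]

lemma card_filter_le_filter_mod_packedBetaSet (hr : r < t) (L : ℕ) :
    #(((packedBetaSet t m).filter (· % t = r)).filter (t * L ≤ ·)) = m r - L := by
  rw [mul_comm t L, filter_mod_packedBetaSet hr, filter_image,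
    card_image_of_injective _ (mul_add_injective hr), ← Nat.card_Ico]
  congr 1
  ext k
  simp only [mem_filter, mem_range, mem_Ico, ← not_lt, mul_add_lt_mul_iff hr]
  omega

lemma card_filter_mod_range_sdiff_packedBetaSet (hr : r < t) (L : ℕ) :
    #((range (t * L) \ packedBetaSet t m).filter (· % t = r)) = L - m r := by
  have himage : (range (t * L) \ packedBetaSet t m).filter (· % t = r) =
      (range L \ range (m r)).image (· * t + r) := by
    rw [image_sdiff _ _ (mul_add_injective hr), ← filter_mod_range_mul hr,
      ← filter_mod_packedBetaSet hr]
    ext x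
    simp only [mem_filter, mem_sdiff]
    tauto
  rw [himage, card_image_of_injective _ (mul_add_injective hr), ← Nat.card_Ico]
  congr 1
  ext k
  simp only [mem_sdiff, mem_range, mem_Ico]
  omega

end Packed

section Core

variable {t : ℕ} {lam : ℕ → ℕ}

lemma tCore_eq_partitionOfBetaSet : tCore t lam =
    partitionOfBetaSet (packedBetaSet t (mr t lam (t * (plen lam + 1)))) (t * (plen lam + 1)) :=
  rfl

lemma card_packedBetaSet_mr (hlam : Antitone lam) (ht : 0 < t) (N : ℕ) :
    #(packedBetaSet t (mr t lam N)) = N := by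
  rw [card_packedBetaSet ht, sum_mr hlam ht]

lemma isPartition_tCore (hlam : IsPartition lam) (ht : 0 < t) : IsPartition (tCore t lam) := by
  rw [tCore_eq_partitionOfBetaSet]
  exact isPartition_partitionOfBetaSet (card_packedBetaSet_mr hlam.1 ht _)

lemma plen_tCore_le : plen (tCore t lam) ≤ t * (plen lam + 1) := by
  rw [tCore_eq_partitionOfBetaSet]
  exact plen_partitionOfBetaSet_le

lemma betaSet_tCore (hlam : IsPartition lam) (ht : 0 < t) :
    betaSet (tCore t lam) (t * (plen lam + 1)) =
      packedBetaSet t (mr t lam (t * (plen lam + 1))) := by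
  rw [tCore_eq_partitionOfBetaSet]
  exact betaSet_partitionOfBetaSet (card_packedBetaSet_mr hlam.1 ht _)

lemma rk_tCore (hlam : IsPartition lam) (ht : 0 < t) :
    rk (tCore t lam) =
      ∑ r ∈ range t, (mr t lam (t * (plen lam + 1)) r - (plen lam + 1)) := by
  rw [(isPartition_tCore hlam ht).rk_eq_card_filter_le_betaSet plen_tCore_le,
    betaSet_tCore hlam ht, card_eq_sum_card_fiberwise fun x _ => mem_range.2 (Nat.mod_lt x ht)]
  refine sum_congr rfl fun r hr => ?_
  rw [filter_comm, card_filter_le_filter_mod_packedBetaSet (mem_range.1 hr)]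

lemma ZAsymmetric.mr_sub_eq_sub_mr {z : ℤ} (hz : ZAsymmetric z (tCore t lam))
    (hlam : IsPartition lam) {M : ℕ} (hM : (M : ℤ) = 2 * (t * (plen lam + 1) : ℕ) - 1 - z)
    {r r' : ℕ} (hr : r < t) (hr' : r' < t) (hrr' : r + r' ≡ M [MOD t]) :
    mr t lam (t * (plen lam + 1)) r - (plen lam + 1) =
      (plen lam + 1) - mr t lam (t * (plen lam + 1)) r' := by
  have ht : 0 < t := by omega
  have hμ := isPartition_tCore (t := t) hlam ht
  rw [← card_filter_le_filter_mod_packedBetaSet hr, ← betaSet_tCore hlam ht, filter_comm,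
    ← card_filter_mod_image_sub (hz.le_of_mem_filter_le_betaSet hμ plen_tCore_le hM) hr hr' hrr',
    hz.image_sub_filter_le_betaSet hμ plen_tCore_le hM, betaSet_tCore hlam ht,
    card_filter_mod_range_sdiff_packedBetaSet hr']

end Core

/-- For `c, r < t`, the residue of `c - r` modulo `t`. -/
def reflectMod (t c r : ℕ) : ℕ := if r ≤ c then c - r else t + c - r

section ReflectMod

variable {t c r : ℕ}

lemma reflectMod_lt (hc : c < t) (hr : r < t) : reflectMod t c r < t := by
  unfold reflectMod; split_ifs <;> omega

lemma reflectMod_reflectMod (hc : c < t) (hr : r < t) :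
    reflectMod t c (reflectMod t c r) = r := by
  unfold reflectMod; split_ifs <;> omega

lemma add_reflectMod_modEq (hr : r < t) : r + reflectMod t c r ≡ c [MOD t] := by
  unfold reflectMod
  split_ifs with h
  · rw [Nat.add_sub_cancel' h]
  · rw [show r + (t + c - r) = c + t by omega]
    exact Nat.add_mod_right c t

end ReflectMod

lemma Finset.sum_eq_sum_add_of_involution {ι M : Type*} [DecidableEq ι] [AddCommMonoid M]
    {s S₁ S₂ : Finset ι} {ρ : ι → ι} {f g : ι → M} (hρ : ∀ a ∈ s, ρ a ∈ s ∧ ρ (ρ a) = a)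
    (hS₁ : S₁ ⊆ s) (hS₂ : S₂ ⊆ s) (hdisj : Disjoint S₁ S₂)
    (hmem : ∀ a ∈ s, a ∈ S₂ ↔ ρ a ∈ S₁) (hfg : ∀ a ∈ s, f a = g (ρ a))
    (hzero : ∀ a ∈ s, a ∉ S₁ → a ∉ S₂ → f a = 0) :
    ∑ a ∈ s, f a = ∑ a ∈ S₁, (f a + g a) := by
  have hsum₂ : ∑ a ∈ S₂, f a = ∑ a ∈ S₁, g a :=
    sum_nbij' ρ ρ (fun a ha => (hmem a (hS₂ ha)).1 ha)
      (fun a ha => (hmem _ (hρ a (hS₁ ha)).1).2 (by rwa [(hρ a (hS₁ ha)).2]))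
      (fun a ha => (hρ a (hS₂ ha)).2) (fun a ha => (hρ a (hS₁ ha)).2)
      (fun a ha => hfg a (hS₂ ha))
  rw [sum_add_distrib, ← hsum₂, ← sum_union hdisj]
  refine (sum_subset (union_subset hS₁ hS₂) fun a ha hn => hzero a ha ?_ ?_).symm
  exacts [fun h => hn (mem_union_left _ h), fun h => hn (mem_union_right _ h)]

section CoreRank

variable {t n : ℕ} {lam : ℕ → ℕ} {z : ℤ} {c : ℕ} {S₁ S₂ : Finset ℕ}

theorem rk_tCore_eq_sum_natAbs (hlam : IsPartition lam) (hlen : plen lam ≤ n * t)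
    (hz : ZAsymmetric z (tCore t lam)) (hz1 : z ≤ 1) (hc : c < t) (hcz : (t : ℤ) ∣ c + 1 + z)
    (hS₁ : S₁ ⊆ range t) (hS₂ : S₂ ⊆ range t) (hdisj : Disjoint S₁ S₂)
    (hmem : ∀ r < t, r ∈ S₂ ↔ reflectMod t c r ∈ S₁)
    (hfix : ∀ r < t, r ∉ S₁ → r ∉ S₂ → reflectMod t c r = r) :
    rk (tCore t lam) = ∑ r ∈ S₁, ((mr t lam (n * t) r : ℤ) - n).natAbs := by
  have ht : 0 < t := by omega
  set L := plen lam + 1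
  set m := mr t lam (t * L)
  have htL : 0 < t * L := Nat.mul_pos ht (Nat.succ_pos _)
  obtain ⟨M, hM⟩ : ∃ M : ℕ, (M : ℤ) = 2 * (t * L : ℕ) - 1 - z :=
    ⟨_, Int.toNat_of_nonneg (by omega)⟩
  have hcM : c ≡ M [MOD t] := by
    rw [Nat.modEq_iff_dvd, hM,
      show 2 * ((t * L : ℕ) : ℤ) - 1 - z - c = t * (2 * L) - (c + 1 + z) by push_cast; ring]
    exact dvd_sub (dvd_mul_right _ _) hcz
  have hkey : ∀ r ∈ range t, m r - L = L - m (reflectMod t c r) := fun r hr =>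
    hz.mr_sub_eq_sub_mr hlam hM (mem_range.1 hr) (reflectMod_lt hc (mem_range.1 hr))
      ((add_reflectMod_modEq (mem_range.1 hr)).trans hcM)
  have hnatAbs : ∀ r ∈ range t, m r - L + (L - m r) = ((mr t lam (n * t) r : ℤ) - n).natAbs := by
    intro r hr
    have hshift : (m r : ℤ) - L = mr t lam (n * t) r - n := by
      have := hlam.mr_mul_sub_eq (mem_range.1 hr)
        ((Nat.le_succ _).trans (Nat.le_mul_of_pos_right _ ht)) hlen
      rwa [mul_comm L t] at this
    omega
  have hinv : ∀ r ∈ range t, reflectMod t c r ∈ range t ∧ reflectMod t c (reflectMod t c r) = r :=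
    fun r hr => ⟨mem_range.2 (reflectMod_lt hc (mem_range.1 hr)),
      reflectMod_reflectMod hc (mem_range.1 hr)⟩
  have hzero : ∀ r ∈ range t, r ∉ S₁ → r ∉ S₂ → m r - L = 0 := by
    intro r hr h₁ h₂
    have := hkey r hr
    rw [hfix r (mem_range.1 hr) h₁ h₂] at this
    omega
  rw [rk_tCore hlam ht, sum_eq_sum_add_of_involution (g := fun r => L - m r) hinv hS₁ hS₂ hdisj
    (fun r hr => hmem r (mem_range.1 hr)) hkey hzero]
  exact sum_congr rfl fun r hr => hnatAbs r (hS₁ hr)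

theorem rk_tCore_eq_sum_natAbs_and_eq_sum_natAbs (hlam : IsPartition lam)
    (hlen : plen lam ≤ n * t) (hz : ZAsymmetric z (tCore t lam)) (hz1 : z ≤ 1) (hc : c < t)
    (hcz : (t : ℤ) ∣ c + 1 + z) (hS₁ : S₁ ⊆ range t) (hS₂ : S₂ ⊆ range t)
    (hdisj : Disjoint S₁ S₂) (hmem : ∀ r < t, r ∈ S₂ ↔ reflectMod t c r ∈ S₁)
    (hfix : ∀ r < t, r ∉ S₁ → r ∉ S₂ → reflectMod t c r = r) :
    rk (tCore t lam) = ∑ r ∈ S₁, ((mr t lam (n * t) r : ℤ) - n).natAbs ∧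
      rk (tCore t lam) = ∑ r ∈ S₂, ((mr t lam (n * t) r : ℤ) - n).natAbs := by
  refine ⟨rk_tCore_eq_sum_natAbs hlam hlen hz hz1 hc hcz hS₁ hS₂ hdisj hmem hfix,
    rk_tCore_eq_sum_natAbs hlam hlen hz hz1 hc hcz hS₂ hS₁ hdisj.symm (fun r hr => ?_)
      fun r hr h₂ h₁ => hfix r hr h₁ h₂⟩
  rw [hmem _ (reflectMod_lt hc hr), reflectMod_reflectMod hc hr]

end CoreRank

theorem rk_core_sums_general (t n : ℕ) (ht : 2 ≤ t) (lam : ℕ → ℕ)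
    (hlam : IsPartition lam) (hlen : plen lam ≤ n * t) :
    (ZAsymmetric (-1) (tCore t lam) →
      rk (tCore t lam) =
        (∑ r ∈ Finset.Icc 1 ((t - 1) / 2), ((mr t lam (n * t) r : ℤ) - n).natAbs) ∧
      rk (tCore t lam) =
        ∑ r ∈ Finset.Icc ((t + 2) / 2) (t - 1), ((mr t lam (n * t) r : ℤ) - n).natAbs) ∧
    (ZAsymmetric 1 (tCore t lam) →
      rk (tCore t lam) =
        (∑ r ∈ Finset.range ((t - 1) / 2), ((mr t lam (n * t) r : ℤ) - n).natAbs) ∧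
      rk (tCore t lam) =
        ∑ r ∈ Finset.Icc (t / 2) (t - 2), ((mr t lam (n * t) r : ℤ) - n).natAbs) ∧
    (conjP (tCore t lam) = tCore t lam →
      rk (tCore t lam) =
        (∑ r ∈ Finset.range (t / 2), ((mr t lam (n * t) r : ℤ) - n).natAbs) ∧
      rk (tCore t lam) =
        ∑ r ∈ Finset.Icc ((t + 1) / 2) (t - 1), ((mr t lam (n * t) r : ℤ) - n).natAbs) := by
  refine ⟨fun hz => rk_tCore_eq_sum_natAbs_and_eq_sum_natAbs hlam hlen hz (by norm_num)
      (c := 0) (by omega) ⟨0, by omega⟩ ?_ ?_ ?_ ?_ ?_,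
    fun hz => rk_tCore_eq_sum_natAbs_and_eq_sum_natAbs hlam hlen hz le_rfl
      (c := t - 2) (by omega) ⟨1, by omega⟩ ?_ ?_ ?_ ?_ ?_,
    fun hconj => rk_tCore_eq_sum_natAbs_and_eq_sum_natAbs hlam hlen (z := 0)
      (fun i _ => by simp [hconj]) zero_le_one (c := t - 1) (by omega) ⟨1, by omega⟩
      ?_ ?_ ?_ ?_ ?_⟩
  all_goals
    simp only [subset_iff, disjoint_left, mem_Icc, mem_range, reflectMod]
    intros
    (try split_ifs) <;> omega

/-- **Lemma (Ayyer–Kumari, rank of the `t`-core).** For `λ` of length at most `nt`: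
if the `t`-core of `λ` is orthogonal, then
`rk(t-core(λ)) = ∑_{r=1}^{⌊(t-1)/2⌋} |m_r - n| = ∑_{r=⌊(t+2)/2⌋}^{t-1} |m_r - n|`;
if symplectic, then
`rk(t-core(λ)) = ∑_{r=0}^{⌊(t-3)/2⌋} |m_r - n| = ∑_{r=⌊t/2⌋}^{t-2} |m_r - n|`;
if self-conjugate, then
`rk(t-core(λ)) = ∑_{r=0}^{⌊(t-2)/2⌋} |m_r - n| = ∑_{r=⌊(t+1)/2⌋}^{t-1} |m_r - n|`,
where `m_r = m_r(λ;nt)`.  (The ranges `r ≤ ⌊(t-3)/2⌋` resp. `r ≤ ⌊(t-2)/2⌋` are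
written as `r < ⌊(t-1)/2⌋` resp. `r < ⌊t/2⌋`, the same ranges for all `t ≥ 2`.) -/
theorem rk_core_sums (t n : ℕ) (ht : 2 ≤ t) (hn : 0 < n) (lam : ℕ → ℕ)
    (hlam : IsPartition lam) (hlen : plen lam ≤ n * t) :
    (ZAsymmetric (-1) (tCore t lam) →
      rk (tCore t lam) =
        (∑ r ∈ Finset.Icc 1 ((t - 1) / 2), ((mr t lam (n * t) r : ℤ) - n).natAbs) ∧
      rk (tCore t lam) =
        ∑ r ∈ Finset.Icc ((t + 2) / 2) (t - 1), ((mr t lam (n * t) r : ℤ) - n).natAbs) ∧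
    (ZAsymmetric 1 (tCore t lam) →
      rk (tCore t lam) =
        (∑ r ∈ Finset.range ((t - 1) / 2), ((mr t lam (n * t) r : ℤ) - n).natAbs) ∧
      rk (tCore t lam) =
        ∑ r ∈ Finset.Icc (t / 2) (t - 2), ((mr t lam (n * t) r : ℤ) - n).natAbs) ∧
    (conjP (tCore t lam) = tCore t lam →
      rk (tCore t lam) =
        (∑ r ∈ Finset.range (t / 2), ((mr t lam (n * t) r : ℤ) - n).natAbs) ∧
      rk (tCore t lam) =
        ∑ r ∈ Finset.Icc ((t + 1) / 2) (t - 1), ((mr t lam (n * t) r : ℤ) - n).natAbs) :=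
  rk_core_sums_general t n ht lam hlam hlen

end
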